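/- arXiv:2403.14900 — 4 statements merged into one kernel-verified Lean document; each statement's English description precedes it below -/
import Mathlib

section
/- Let E and C be abelian groups, let n be a positive integer, and let 0 → H → C →f→ E → 0 be a short exact sequence of abelian groups with H finite of exponent dividing n (i.e., n·h = 0 for all h ∈ H). Suppose E is n-divisible and multiplication by n on E is surjective. Let C' = {(e, c) ∈ E × C : n·e = f(c)} with map f'(e,c) = e. Then for every e ∈ E there exists a unique x ∈ n·C' with f'(x) = e, and the assignment e ↦ x defines a group homomorphism s : E → C' with f' ∘ s = id. Hence the pulled-back extension 0 → H → C' → E → 0 splits. -/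
/-- The fiber product `C' = {(e, c) : n•e = f c} ≤ E × C`. -/
def pullbackSubgroup {E C : Type*} [AddCommGroup E] [AddCommGroup C] (f : C →+ E) (n : ℕ) :
    AddSubgroup (E × C) where
  carrier := {p | n • p.1 = f p.2}
  zero_mem' := by simp
  add_mem' := by
    intro a b ha hb
    simp only [Set.mem_setOf_eq, Prod.fst_add, Prod.snd_add, smul_add, map_add] at *
    rw [ha, hb]
  neg_mem' := by
    intro a ha
    simp only [Set.mem_setOf_eq, Prod.fst_neg, Prod.snd_neg, smul_neg, map_neg] at *
    rw [ha]


/-! Write `C'` for `pullbackSubgroup f n`. The homomorphism `y ↦ n • y.1 : C' → E` is surjective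
by divisibility of `E`, and its kernel is killed by `n`: if `n • y.1 = 0` then `f y.2 = 0`, so
`y.2 ∈ ker f` and `n • y = 0`. Hence multiplication by `n` on `C'` factors through it, giving a
homomorphism `s : E → C'` with `s (n • y.1) = n • y`; this `s` is the required section, and the
factorisation also forces uniqueness. -/

namespace pullbackSubgroup

variable {E C : Type*} [AddCommGroup E] [AddCommGroup C] (f : C →+ E) (n : ℕ)

theorem mem_iff {p : E × C} : p ∈ pullbackSubgroup f n ↔ n • p.1 = f p.2 := Iff.rfl

def nsmulFst : pullbackSubgroup f n →+ E :=
  (nsmulAddMonoidHom n).comp ((AddMonoidHom.fst E C).comp (pullbackSubgroup f n).subtype)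

@[simp]
theorem nsmulFst_apply (y : pullbackSubgroup f n) : nsmulFst f n y = n • (y : E × C).1 := rfl

variable {f n}

theorem nsmulFst_surjective (hf : Function.Surjective f) (hdiv : ∀ e : E, ∃ e' : E, n • e' = e) :
    Function.Surjective (nsmulFst f n) := by
  intro e
  obtain ⟨e', rfl⟩ := hdiv e
  obtain ⟨c, hc⟩ := hf (n • e')
  exact ⟨⟨(e', c), hc.symm⟩, rfl⟩

theorem ker_nsmulFst_le (hexp : ∀ h ∈ f.ker, n • h = 0) :
    (nsmulFst f n).ker ≤ (nsmulAddMonoidHom n).ker := by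
  rintro ⟨⟨e, c⟩, hy⟩ hker
  have he : n • e = 0 := hker
  have hc : c ∈ f.ker := by rw [AddMonoidHom.mem_ker, ← (mem_iff f n).mp hy, he]
  exact Subtype.ext (Prod.ext he (hexp c hc))

theorem exists_section_nsmulFst (hf : Function.Surjective f) (hexp : ∀ h ∈ f.ker, n • h = 0)
    (hdiv : ∀ e : E, ∃ e' : E, n • e' = e) :
    ∃ s : E →+ pullbackSubgroup f n, ∀ y, s (nsmulFst f n y) = n • y :=
  ⟨(nsmulFst f n).liftOfSurjective (nsmulFst_surjective hf hdiv)
      ⟨nsmulAddMonoidHom n, ker_nsmulFst_le hexp⟩,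
    fun y => AddMonoidHom.liftOfRightInverse_comp_apply _ _ _ _ y⟩

end pullbackSubgroup

theorem pullback_extension_splits_general {E C : Type*} [AddCommGroup E] [AddCommGroup C]
    (f : C →+ E) (hf : Function.Surjective f) (n : ℕ)
    (hexp : ∀ h ∈ f.ker, n • h = 0)
    (hdiv : ∀ e : E, ∃ e' : E, n • e' = e) :
    (∀ e : E, ∃! x : E × C, (∃ y ∈ pullbackSubgroup f n, x = n • y) ∧ x.1 = e) ∧
    ∃ s : E →+ (pullbackSubgroup f n), ∀ e : E,
      ((s e : E × C).1 = e ∧ ∃ y ∈ pullbackSubgroup f n, (s e : E × C) = n • y) := by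
  obtain ⟨s, hs⟩ := pullbackSubgroup.exists_section_nsmulFst hf hexp hdiv
  have hs_val (y : E × C) (hy : y ∈ pullbackSubgroup f n) : (s (n • y.1) : E × C) = n • y :=
    congrArg Subtype.val (hs ⟨y, hy⟩)
  have hs_spec (e : E) :
      (s e : E × C).1 = e ∧ ∃ y ∈ pullbackSubgroup f n, (s e : E × C) = n • y := by
    obtain ⟨⟨y, hy⟩, rfl⟩ := pullbackSubgroup.nsmulFst_surjective hf hdiv e
    rw [pullbackSubgroup.nsmulFst_apply, hs_val y hy]
    exact ⟨rfl, y, hy, rfl⟩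
  refine ⟨fun e => ⟨s e, ⟨(hs_spec e).2, (hs_spec e).1⟩, ?_⟩, s, hs_spec⟩
  rintro _ ⟨⟨y, hy, rfl⟩, rfl⟩
  exact (hs_val y hy).symm

/-- Given a short exact sequence `0 → H → C → E → 0` of abelian groups with `H = ker f`
finite of exponent dividing `n`, and `E` `n`-divisible, the pulled-back extension
`C' = E ×_E C` (along multiplication by `n`) splits: for every `e : E` there is a unique
`x ∈ n·C'` with first coordinate `e`, and `e ↦ x` is a homomorphic section. -/
theorem pullback_extension_splits {E C : Type*} [AddCommGroup E] [AddCommGroup C]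
    (f : C →+ E) (hf : Function.Surjective f) (n : ℕ) (hn : 0 < n)
    (hfin : (f.ker : Set C).Finite) (hexp : ∀ h ∈ f.ker, n • h = 0)
    (hdiv : ∀ e : E, ∃ e' : E, n • e' = e) :
    (∀ e : E, ∃! x : E × C, (∃ y ∈ pullbackSubgroup f n, x = n • y) ∧ x.1 = e) ∧
    ∃ s : E →+ (pullbackSubgroup f n), ∀ e : E,
      ((s e : E × C).1 = e ∧ ∃ y ∈ pullbackSubgroup f n, (s e : E × C) = n • y) :=
  pullback_extension_splits_general f hf n hexp hdiv
end

section
/- Let F be a differential field of characteristic zero with derivation δ, f ∈ F(x₀,...,x_{m-1}), and let a be an element of a differential field extension with δ^m(a) = f(a, δa, ..., δ^{m-1}a), such that a, δa, ..., δ^{m-1}a are algebraically independent over F. Suppose h ∈ F(x₀,...,x_{m-1}) is nonzero, e ∈ F, and k is a nonzero integer satisfying the identity (k·x₀ − e)·h = Σ_{i=0}^{m-2} (∂h/∂xᵢ)·x_{i+1} + (∂h/∂x_{m-1})·f + δ^F(h) in F(x₀,...,x_{m-1}). Let u be a nonzero solution of δ(u)/u = a. Then w₂ := u^k / h(ā)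 satisfies δ(w₂)/w₂ = e, where ā = (a, δa, ..., δ^{m-1}a). -/
open MvPolynomial

/-- The rational function field `F(x₀,…,x_{m-1})`. -/
abbrev RatFuncField (F : Type*) [Field F] (m : ℕ) : Type _ :=
  FractionRing (MvPolynomial (Fin m) F)

/-- Coefficient-wise application of a derivation: `δ^F(P) = P^δ`. -/
noncomputable def coeffDeriv {F : Type*} [CommSemiring F] {m : ℕ} (δF : F → F)
    (p : MvPolynomial (Fin m) F) : MvPolynomial (Fin m) F :=
  p.support.sum fun mo => MvPolynomial.monomial mo (δF (p.coeff mo))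

/-!
Evaluation at `ā = (a, δa, …, δ^{m-1}a)` intertwines the derivation
`D = Σ_{i<m-1} x_{i+1} ∂ᵢ + f ∂_{m-1} + δ^F` of `F(x₀,…,x_{m-1})` with `δ`: this is the chain
rule together with `δ^m a = f(ā)`. Hence the hypothesis `D h = (k x₀ - e) h` evaluates to
`log_δ h(ā) = k a - e`, while `log_δ (u^k) = k a`, so `log_δ (u^k / h(ā)) = e`.
-/

theorem IsLocalization.eq_of_leibniz {A K U : Type*} [CommRing A] (M : Submonoid A) [CommRing K]
    [Algebra A K] [IsLocalization M K] [CommRing U] (φ : K →+* U) {d₁ d₂ : K → U}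
    (h₁ : ∀ x y, d₁ (x * y) = φ x * d₁ y + φ y * d₁ x)
    (h₂ : ∀ x y, d₂ (x * y) = φ x * d₂ y + φ y * d₂ x)
    (hA : ∀ a, d₁ (algebraMap A K a) = d₂ (algebraMap A K a)) (x : K) : d₁ x = d₂ x := by
  obtain ⟨⟨p, q⟩, rfl⟩ := IsLocalization.mk'_surjective M x
  have key := hA p
  rw [← IsLocalization.mk'_spec K p q, h₁, h₂, hA q, add_right_inj] at key
  exact ((IsLocalization.map_units K q).map φ).mul_left_cancel key

theorem Derivation.leibniz_zpow_div {R K : Type*} [CommRing R] [Field K] [Algebra R K]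
    (D : Derivation R K K) {u g a c : K} (hu : u ≠ 0) (hg : g ≠ 0) (hDu : D u = a * u)
    (hDg : D g = c * g) (k : ℤ) : D (u ^ k / g) = (k * a - c) * (u ^ k / g) := by
  rw [leibniz_div, leibniz_zpow, hDu, hDg, zpow_sub_one₀ hu]
  simp only [smul_eq_mul, zsmul_eq_mul]
  field_simp

theorem Fin.sum_eq_sum_ite_add_last {M : Type*} [AddCommMonoid M] {m : ℕ} (hm : 0 < m)
    (t : Fin m → M) :
    ∑ i, t i
      = ∑ i : Fin m, (if (i : ℕ) + 1 < m then t i else 0) + t ⟨m - 1, Nat.sub_one_lt_of_lt hm⟩ := by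
  classical
  have split : ∀ i : Fin m,
      t i = (if (i : ℕ) + 1 < m then t i else 0)
        + if i = ⟨m - 1, Nat.sub_one_lt_of_lt hm⟩ then t i else 0 := by
    intro i
    by_cases hi : (i : ℕ) + 1 < m
    · rw [if_pos hi, if_neg (fun h => by rw [h] at hi; simp at hi; omega), add_zero]
    · rw [if_neg hi, if_pos (Fin.ext (by simp; omega)), zero_add]
  rw [Finset.sum_congr rfl fun i _ => split i, Finset.sum_add_distrib, Finset.sum_ite_eq',
    if_pos (Finset.mem_univ _)]

section CoeffDeriv

variable {F : Type*} [CommSemiring F] {m : ℕ}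

theorem coeff_coeffDeriv {δF : F → F} (h0 : δF 0 = 0) (p : MvPolynomial (Fin m) F)
    (n : Fin m →₀ ℕ) : (coeffDeriv δF p).coeff n = δF (p.coeff n) := by
  classical
  rw [coeffDeriv, coeff_sum]
  simp only [coeff_monomial, Finset.sum_ite_eq']
  split_ifs with hn
  · rfl
  · rw [notMem_support_iff.mp hn, h0]

theorem coeffDeriv_C {δF : F → F} (h0 : δF 0 = 0) (c : F) :
    coeffDeriv (m := m) δF (C c) = C (δF c) := by
  classical
  ext n
  simp only [coeff_coeffDeriv h0, coeff_C]
  split_ifs <;> simp [h0]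

theorem coeffDeriv_add (δF : F →+ F) (p q : MvPolynomial (Fin m) F) :
    coeffDeriv δF (p + q) = coeffDeriv δF p + coeffDeriv δF q := by
  ext n
  simp only [coeff_add, coeff_coeffDeriv δF.map_zero, map_add]

theorem coeffDeriv_mul_X {δF : F → F} (h0 : δF 0 = 0) (p : MvPolynomial (Fin m) F)
    (j : Fin m) : coeffDeriv δF (p * X j) = coeffDeriv δF p * X j := by
  classical
  ext n
  simp only [coeff_coeffDeriv h0, coeff_mul_X']
  split_ifs <;> simp [h0]

end CoeffDeriv

section ChainRule

variable {F U : Type*} [Field F] [Field U] [Algebra F U] {m : ℕ}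

theorem Derivation.map_aeval_eq (δF : Derivation ℤ F F) (δU : Derivation ℤ U U)
    (hcompat : ∀ c : F, δU (algebraMap F U c) = algebraMap F U (δF c))
    (b : Fin m → U) (P : MvPolynomial (Fin m) F) :
    δU (aeval b P) = ∑ i, aeval b (pderiv i P) * δU (b i) + aeval b (coeffDeriv δF P) := by
  classical
  induction P using MvPolynomial.induction_on with
  | C c => simp [coeffDeriv_C δF.map_zero, hcompat c]
  | add p q hp hq =>
    rw [map_add, map_add, hp, hq, show (δF : F → F) = δF.toAddMonoidHom from rfl,
      coeffDeriv_add]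
    simp only [map_add, add_mul, Finset.sum_add_distrib]
    ring
  | mul_X p j hp =>
    have hpderiv : ∀ i, aeval b (pderiv i (p * X j)) * δU (b i)
        = b j * (aeval b (pderiv i p) * δU (b i))
          + if i = j then aeval b p * δU (b j) else 0 := by
      intro i
      rw [pderiv_mul, pderiv_X]
      by_cases hij : i = j
      · subst hij; simp; ring
      · simp [hij]; ring
    rw [Finset.sum_congr rfl fun i _ => hpderiv i, Finset.sum_add_distrib, ← Finset.mul_sum,
      Finset.sum_ite_eq' Finset.univ j, if_pos (Finset.mem_univ j)]
    simp only [map_mul, aeval_X, Derivation.leibniz, smul_eq_mul, hp,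
      coeffDeriv_mul_X δF.map_zero]
    ring

theorem Derivation.map_ratFunc_eq (δF : Derivation ℤ F F) (δU : Derivation ℤ U U)
    (hcompat : ∀ c : F, δU (algebraMap F U c) = algebraMap F U (δF c))
    (Di : Fin m → Derivation ℤ (RatFuncField F m) (RatFuncField F m))
    (hDi : ∀ (i : Fin m) (P : MvPolynomial (Fin m) F),
      Di i (algebraMap (MvPolynomial (Fin m) F) (RatFuncField F m) P)
        = algebraMap (MvPolynomial (Fin m) F) (RatFuncField F m) (pderiv i P))
    (Dδ : Derivation ℤ (RatFuncField F m) (RatFuncField F m))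
    (hDδ : ∀ P : MvPolynomial (Fin m) F,
      Dδ (algebraMap (MvPolynomial (Fin m) F) (RatFuncField F m) P)
        = algebraMap (MvPolynomial (Fin m) F) (RatFuncField F m) (coeffDeriv δF P))
    (b : Fin m → U) (φ : RatFuncField F m →+* U)
    (hφ : ∀ P : MvPolynomial (Fin m) F,
      φ (algebraMap (MvPolynomial (Fin m) F) (RatFuncField F m) P) = aeval b P)
    (x : RatFuncField F m) :
    δU (φ x) = ∑ i, φ (Di i x) * δU (b i) + φ (Dδ x) := by
  refine IsLocalization.eq_of_leibniz (nonZeroDivisors (MvPolynomial (Fin m) F)) φ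
    (d₁ := fun x => δU (φ x)) (d₂ := fun x => ∑ i, φ (Di i x) * δU (b i) + φ (Dδ x))
    (fun x y => ?_) (fun x y => ?_) (fun P => ?_) x
  · simp only [map_mul, Derivation.leibniz, smul_eq_mul]
  · simp only [Derivation.leibniz, smul_eq_mul, map_add, map_mul, add_mul, mul_add,
      Finset.sum_add_distrib, Finset.mul_sum, mul_assoc]
    ring
  · simp only [hφ, hDi, hDδ]
    exact Derivation.map_aeval_eq δF δU hcompat b P

end ChainRule

/-- Forward direction of the product-splitting criterion: if
`(k·x₀ − e)·h = Σ_{i≤m-2} (∂h/∂xᵢ)·x_{i+1} + (∂h/∂x_{m-1})·f + δ^F(h)` holds in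
`F(x₀,…,x_{m-1})`, `a` is a generic solution of `δ^m(y) = f(y,…,δ^{m-1}y)`, and
`log_δ(u) = a`, then `w₂ = u^k / h(ā)` satisfies `log_δ(w₂) = e`. -/
theorem productSplitting_forward {F U : Type*} [Field F] [Field U] [Algebra F U]
    (δF : Derivation ℤ F F) (δU : Derivation ℤ U U)
    (hcompat : ∀ c : F, δU (algebraMap F U c) = algebraMap F U (δF c))
    (m : ℕ) (hm : 0 < m)
    (Di : Fin m → Derivation ℤ (RatFuncField F m) (RatFuncField F m))
    (hDi : ∀ (i : Fin m) (P : MvPolynomial (Fin m) F),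
      Di i (algebraMap (MvPolynomial (Fin m) F) (RatFuncField F m) P)
        = algebraMap (MvPolynomial (Fin m) F) (RatFuncField F m) (pderiv i P))
    (Dδ : Derivation ℤ (RatFuncField F m) (RatFuncField F m))
    (hDδ : ∀ P : MvPolynomial (Fin m) F,
      Dδ (algebraMap (MvPolynomial (Fin m) F) (RatFuncField F m) P)
        = algebraMap (MvPolynomial (Fin m) F) (RatFuncField F m) (coeffDeriv (⇑δF) P))
    (f h : RatFuncField F m) (hh : h ≠ 0) (e : F) (k : ℤ)
    (hid : ((k : RatFuncField F m) *
        algebraMap (MvPolynomial (Fin m) F) (RatFuncField F m) (X (⟨0, hm⟩ : Fin m)) -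
        algebraMap (MvPolynomial (Fin m) F) (RatFuncField F m) (C e)) * h
      = (∑ i : Fin m, if hi : (i : ℕ) + 1 < m then
          Di i h * algebraMap (MvPolynomial (Fin m) F) (RatFuncField F m)
            (X (⟨(i : ℕ) + 1, hi⟩ : Fin m)) else 0)
        + Di (⟨m - 1, by omega⟩ : Fin m) h * f + Dδ h)
    (a : U)
    (φ : RatFuncField F m →+* U)
    (hφ : ∀ P : MvPolynomial (Fin m) F,
      φ (algebraMap (MvPolynomial (Fin m) F) (RatFuncField F m) P)
        = aeval (fun i : Fin m => (⇑δU)^[(i : ℕ)] a) P)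
    (hsol : (⇑δU)^[m] a = φ f)
    (u : U) (hu : u ≠ 0) (hlog : δU u / u = a) :
    δU (u ^ k / φ h) / (u ^ k / φ h) = algebraMap F U e := by
  have hφh : φ h ≠ 0 := (map_ne_zero φ).mpr hh
  have hDu : δU u = a * u := (div_eq_iff hu).mp hlog
  -- Evaluated at `ā`, the right-hand side of `hid` is `δU (φ h)`, by the chain rule and `hsol`.
  have hDh : δU (φ h) = (k * a - algebraMap F U e) * φ h := by
    have := congrArg φ hid
    simp only [map_mul, map_sub, map_add, map_intCast, map_sum, apply_dite φ, map_zero, hφ,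
      aeval_X, aeval_C, Function.iterate_zero_apply, ← hsol] at this
    rw [this, Derivation.map_ratFunc_eq δF δU hcompat Di hDi Dδ hDδ _ φ hφ,
      Fin.sum_eq_sum_ite_add_last hm]
    have hlast : δU (δU^[m - 1] a) = δU^[m] a := by
      rw [← Function.iterate_succ_apply' δU, Nat.succ_eq_add_one, Nat.sub_add_cancel hm]
    simp [Function.iterate_succ_apply', hlast]
  rw [δU.leibniz_zpow_div hu hφh hDu hDh, mul_div_assoc,
    div_self (div_ne_zero (zpow_ne_zero k hu) hφh), mul_one]
  ring
end

section
/- Let K be a differential field of characteristic zero with derivation δ, containing an element s with δ(a)/a = s for some transcendental element a over K in a differential field extension. Suppose f, g ∈ K[X] are polynomials with leading coefficients b_n ≠ 0 and d_m ≠ 0 (of degrees n ≥ m respectively), and suppose the rational function f(a)/g(a) is a nonzero constant (i.e., δ(f(a)/g(a)) = 0). If moreover every polynomial identity over K satisfied by a has all coefficients zero (a is transcendental over K), then log_δ(a^{n−m}) = log_δ(d_m/b_n); that is, δ(a^{n−m}·b_n/d_m) = 0. -/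
/-!
Since `a′ = s a`, evaluation at `a` intertwines the derivation of `U` with the derivation
`D = implicitDeriv (C s * X)` of `K[X]`, which extends the one of `K` by `X′ = s X`. It sends
`c X^j` to `(c′ + j s c) X^j`, so it does not raise degrees. A constant ratio gives
`f(a)′ g(a) = g(a)′ f(a)`, which transcendence of `a` lifts to `D f * g = D g * f` in `K[X]`.
The coefficients of `X^(n+m)` give `(b′ + n s b) d = (d′ + m s d) b`, i.e.
`(b/d)′ = -(n - m) s (b/d)`, and this cancels the derivative `(n - m) s a^(n-m)` of `a^(n-m)`.
-/

open Polynomial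
open scoped Differential

namespace Differential

section CommRing

variable {A : Type*} [CommRing A] [Differential A]

theorem coeff_implicitDeriv_C_mul_X (s : A) (p : A[X]) (j : ℕ) :
    (implicitDeriv (C s * X) p).coeff j = (p.coeff j)′ + j * s * p.coeff j := by
  have hD : implicitDeriv (C s * X) p = mapCoeffs p + C s * (X * derivative p) := by
    simp [implicitDeriv, mul_assoc]
  rw [hD, coeff_add, coeff_mapCoeffs, coeff_C_mul]
  cases j with
  | zero => simp
  | succ k =>
    rw [coeff_X_mul, coeff_derivative]
    push_cast
    ring

theorem natDegree_implicitDeriv_C_mul_X_le (s : A) (p : A[X]) :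
    (implicitDeriv (C s * X) p).natDegree ≤ p.natDegree :=
  natDegree_le_iff_coeff_eq_zero.mpr fun j hj => by
    simp [coeff_implicitDeriv_C_mul_X, coeff_eq_zero_of_natDegree_lt hj]

theorem leadingCoeff_cross_of_implicitDeriv_mul_comm (s : A) {f g : A[X]}
    (h : implicitDeriv (C s * X) f * g = implicitDeriv (C s * X) g * f) :
    (f.leadingCoeff′ + f.natDegree * s * f.leadingCoeff) * g.leadingCoeff =
      (g.leadingCoeff′ + g.natDegree * s * g.leadingCoeff) * f.leadingCoeff := by
  have h' := congrArg (coeff · (f.natDegree + g.natDegree)) h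
  rwa [coeff_mul_add_eq_of_natDegree_le (natDegree_implicitDeriv_C_mul_X_le s f) le_rfl,
    add_comm, coeff_mul_add_eq_of_natDegree_le (natDegree_implicitDeriv_C_mul_X_le s g) le_rfl,
    coeff_implicitDeriv_C_mul_X, coeff_implicitDeriv_C_mul_X] at h'

theorem deriv_pow_of_deriv_eq_mul {a t : A} (ha : a′ = t * a) (k : ℕ) :
    (a ^ k)′ = k * t * a ^ k := by
  cases k with
  | zero => simp
  | succ k =>
    rw [Derivation.leibniz_pow, ha, Nat.add_sub_cancel, nsmul_eq_mul, smul_eq_mul, pow_succ]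
    ring

end CommRing

section Field

variable {K : Type*} [Field K] [Differential K]

theorem deriv_mul_eq_of_deriv_div_eq_zero {x y : K} (hy : y ≠ 0) (h : (x / y)′ = 0) :
    x′ * y = y′ * x := by
  rw [Derivation.leibniz_div, smul_eq_zero] at h
  rw [← sub_eq_zero]
  simpa [hy, mul_comm] using h

theorem deriv_div_add_eq_zero_of_cross {b d s : K} {n m : ℕ} (hd : d ≠ 0)
    (h : (b′ + n * s * b) * d = (d′ + m * s * d) * b) :
    (b / d)′ + ((n : K) - m) * s * (b / d) = 0 := by
  simp only [Derivation.leibniz_div, smul_eq_mul]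
  field_simp
  linear_combination h

end Field

section Algebra

variable {A U : Type*} [CommRing A] [Differential A] [Field U] [Differential U]
  [Algebra A U] [DifferentialAlgebra A U]

theorem implicitDeriv_mul_comm_of_deriv_div_eq_zero {a : U} (ha : Transcendental A a)
    {v : A[X]} (hv : a′ = aeval a v) {f g : A[X]} (hg : g ≠ 0)
    (h : (aeval a f / aeval a g)′ = 0) :
    implicitDeriv v f * g = implicitDeriv v g * f := by
  have hga : aeval a g ≠ 0 := fun h0 => hg (transcendental_iff.mp ha g h0)
  refine sub_eq_zero.mp (transcendental_iff.mp ha _ ?_)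
  rw [map_sub, map_mul, map_mul, ← deriv_aeval_eq_implicitDeriv a v hv,
    ← deriv_aeval_eq_implicitDeriv a v hv, sub_eq_zero]
  exact deriv_mul_eq_of_deriv_div_eq_zero hga h

theorem deriv_pow_mul_algebraMap_eq_zero {a : U} {s c : A} (ha : a′ = algebraMap A U s * a)
    {k : ℕ} (hc : c′ + k * s * c = 0) : (a ^ k * algebraMap A U c)′ = 0 := by
  have hc' := congrArg (algebraMap A U) hc
  simp only [map_add, map_mul, map_natCast, map_zero] at hc'
  rw [Derivation.leibniz, deriv_pow_of_deriv_eq_mul ha, smul_eq_mul, smul_eq_mul,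
    deriv_algebraMap]
  linear_combination a ^ k * hc'

end Algebra

end Differential

open Differential in
theorem logderiv_power_eq_of_const_ratio_general {K U : Type*} [Field K] [Field U]
    [Algebra K U]
    (δK : Derivation ℤ K K) (δU : Derivation ℤ U U)
    (hcompat : ∀ x : K, δU (algebraMap K U x) = algebraMap K U (δK x))
    (a : U) (htr : Transcendental K a)
    (s : K) (hs : δU a = algebraMap K U s * a)
    (f g : Polynomial K) (hg : g ≠ 0)
    (hdeg : g.natDegree ≤ f.natDegree)
    (hconst : δU (Polynomial.aeval a f / Polynomial.aeval a g) = 0) :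
    δU (a ^ (f.natDegree - g.natDegree) * algebraMap K U f.leadingCoeff /
      algebraMap K U g.leadingCoeff) = 0 := by
  let : Differential K := ⟨δK⟩
  let : Differential U := ⟨δU⟩
  have : DifferentialAlgebra K U := ⟨hcompat⟩
  have hv : a′ = aeval a (C s * X) := hs.trans (by rw [map_mul, aeval_C, aeval_X])
  have hfg := implicitDeriv_mul_comm_of_deriv_div_eq_zero htr hv hg hconst
  have hlc := deriv_div_add_eq_zero_of_cross (leadingCoeff_ne_zero.mpr hg)
    (leadingCoeff_cross_of_implicitDeriv_mul_comm s hfg)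
  rw [mul_div_assoc, ← map_div₀]
  exact deriv_pow_mul_algebraMap_eq_zero hs (by rwa [Nat.cast_sub hdeg])

/-- If `a` is transcendental over the differential field `K`, `log_δ(a) = s ∈ K`, and
`f(a)/g(a)` is a nonzero constant, then `log_δ(a^{n−m}) = log_δ(d_m/b_n)`, i.e.
`δ(a^{n−m}·b_n/d_m) = 0`, where `b_n, d_m` are the leading coefficients. -/
theorem logderiv_power_eq_of_const_ratio {K U : Type*} [Field K] [CharZero K] [Field U]
    [Algebra K U]
    (δK : Derivation ℤ K K) (δU : Derivation ℤ U U)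
    (hcompat : ∀ x : K, δU (algebraMap K U x) = algebraMap K U (δK x))
    (a : U) (htr : Transcendental K a)
    (s : K) (hs : δU a = algebraMap K U s * a)
    (f g : Polynomial K) (hf : f ≠ 0) (hg : g ≠ 0)
    (hdeg : g.natDegree ≤ f.natDegree)
    (hne : Polynomial.aeval a f / Polynomial.aeval a g ≠ 0)
    (hconst : δU (Polynomial.aeval a f / Polynomial.aeval a g) = 0) :
    δU (a ^ (f.natDegree - g.natDegree) * algebraMap K U f.leadingCoeff /
      algebraMap K U g.leadingCoeff) = 0 :=
  logderiv_power_eq_of_const_ratio_general δK δU hcompat a htr s hs f g hg hdeg hconst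
end

section
/- Let F ⊆ U be fields, a ∈ U, and suppose a is algebraic over a subfield L ⊆ U containing F, with monic minimal polynomial P = X^n + Σ_{i<n} cᵢXⁱ over L. Suppose U carries a derivation δ with δ(L) ⊆ L, and δ(a)/a = w ∈ L. Then for each i < n: n·w·cᵢ − δ(cᵢ) − i·cᵢ·w = 0; consequently, for each i < n with cᵢ ≠ 0, δ(a^{n−i}/cᵢ) = 0, i.e. a^{n−i}/cᵢ is a constant. -/
/-!
Differentiating `P(a) = 0` with `δ a = w a` gives `δ(P(a)) = P^δ(a) + w a P'(a)`, so the polynomial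
`n w P - P^δ - w X P'`, whose `i`-th coefficient is `n w cᵢ - δ cᵢ - i cᵢ w`, vanishes at `a`.
Its `Xⁿ`-coefficient cancels because `P` is monic, so it is a multiple of `P` of smaller degree,
hence zero. Then `δ cᵢ = (n - i) w cᵢ`, which is also the derivative of `a^(n-i)` divided by
`a^(n-i)`, so the quotient `a^(n-i) / cᵢ` is a constant.
-/

open Polynomial

namespace Derivation

variable {R : Type*} [CommRing R]

theorem map_pow_of_map_eq_mul {A : Type*} [CommRing A] [Algebra R A] (D : Derivation R A A)
    {a w : A} (h : D a = w * a) (m : ℕ) : D (a ^ m) = m * w * a ^ m := by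
  rcases m with _ | m
  · simp
  · rw [leibniz_pow, h, smul_eq_mul, nsmul_eq_mul, Nat.add_sub_cancel, pow_succ]
    ring

theorem map_div_eq_zero_of_mul_eq {K : Type*} [Field K] [Algebra R K] (D : Derivation R K K)
    {x y : K} (h : D x * y = x * D y) : D (x / y) = 0 := by
  rw [leibniz_div, smul_eq_mul y, mul_comm y, h, smul_eq_mul x, sub_self, smul_zero]

end Derivation

theorem Polynomial.coeff_X_mul_derivative {R : Type*} [Semiring R] (p : R[X]) (j : ℕ) :
    (X * derivative p).coeff j = j * p.coeff j := by
  rcases j with _ | j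
  · simp
  · rw [coeff_X_mul, coeff_derivative, ← Nat.cast_succ, (Nat.cast_commute _ _).eq]

section LogDerivPoly

variable {L U : Type*} [Field L] [Field U] [Algebra L U] (δL : Derivation ℤ L L)

noncomputable def logDerivPoly (w : L) (P : L[X]) : L[X] :=
  C (P.natDegree * w) * P - PolynomialModule.equivPolynomialSelf (δL.mapCoeffs P)
    - C w * (X * derivative P)

theorem coeff_logDerivPoly (w : L) (P : L[X]) (j : ℕ) :
    (logDerivPoly δL w P).coeff j
      = P.natDegree * w * P.coeff j - δL (P.coeff j) - j * P.coeff j * w := by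
  rw [logDerivPoly, coeff_sub, coeff_sub, coeff_C_mul, coeff_C_mul, coeff_X_mul_derivative]
  change _ - δL (P.coeff j) - _ = _
  ring

theorem degree_logDerivPoly_lt (w : L) {P : L[X]} (hP : P.Monic) :
    (logDerivPoly δL w P).degree < P.degree := by
  rw [degree_eq_natDegree hP.ne_zero, degree_lt_iff_coeff_zero]
  intro j hj
  rcases hj.eq_or_lt with rfl | hj
  · rw [coeff_logDerivPoly, hP.coeff_natDegree, δL.map_one_eq_zero]
    ring
  · rw [coeff_logDerivPoly, coeff_eq_zero_of_natDegree_lt hj, δL.map_zero]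
    ring

variable {δL} {δU : Derivation ℤ U U}

theorem aeval_logDerivPoly (hcompat : ∀ c : L, δU (algebraMap L U c) = algebraMap L U (δL c))
    {a : U} {w : L} (hw : δU a = algebraMap L U w * a) (P : L[X]) :
    aeval a (logDerivPoly δL w P)
      = algebraMap L U (P.natDegree * w) * aeval a P - δU (aeval a P) := by
  have hδP := δL.apply_aeval_eq' δU (Algebra.linearMap L U) (fun c => (hcompat c).symm) a P
  rw [← PolynomialModule.aeval_equivPolynomial, smul_eq_mul, hw] at hδP
  simp only [logDerivPoly, map_sub, map_mul, aeval_C, aeval_X, hδP,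
    PolynomialModule.equivPolynomialSelf_apply_eq]
  ring

theorem logDerivPoly_minpoly_eq_zero
    (hcompat : ∀ c : L, δU (algebraMap L U c) = algebraMap L U (δL c))
    {a : U} (ha : IsIntegral L a) {w : L} (hw : δU a = algebraMap L U w * a) :
    logDerivPoly δL w (minpoly L a) = 0 :=
  eq_zero_of_dvd_of_degree_lt
    (minpoly.dvd L a (by simp [aeval_logDerivPoly hcompat hw]))
    (degree_logDerivPoly_lt δL w (minpoly.monic ha))

end LogDerivPoly

theorem minpoly_coeff_logderiv_general {L U : Type*} [Field L] [Field U] [Algebra L U]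
    (δL : Derivation ℤ L L) (δU : Derivation ℤ U U)
    (hcompat : ∀ c : L, δU (algebraMap L U c) = algebraMap L U (δL c))
    (a : U)
    (w : L) (hw : δU a = algebraMap L U w * a) :
    ∀ i < (minpoly L a).natDegree,
      (((minpoly L a).natDegree : L) * w * (minpoly L a).coeff i
          - δL ((minpoly L a).coeff i) - (i : L) * (minpoly L a).coeff i * w = 0)
      ∧ ((minpoly L a).coeff i ≠ 0 →
          δU (a ^ ((minpoly L a).natDegree - i) /
            algebraMap L U ((minpoly L a).coeff i)) = 0) := by
  intro i hi
  have ha : IsIntegral L a := by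
    by_contra h
    simp [minpoly.eq_zero h] at hi
  set n := (minpoly L a).natDegree
  set c := (minpoly L a).coeff i
  have hc : n * w * c - δL c - i * c * w = 0 := by
    rw [← coeff_logDerivPoly, logDerivPoly_minpoly_eq_zero hcompat ha hw, coeff_zero]
  refine ⟨hc, fun _ => δU.map_div_eq_zero_of_mul_eq ?_⟩
  have hδc : δL c = (n - i : ℕ) * w * c := by
    rw [Nat.cast_sub hi.le]
    linear_combination -hc
  rw [δU.map_pow_of_map_eq_mul hw, hcompat, hδc]
  simp only [map_mul, map_natCast]
  ring

/-- If `a` is algebraic over the differential subfield `L` with minimal polynomial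
`P = Xⁿ + Σ cᵢXⁱ` and `log_δ(a) = w ∈ L`, then `n·w·cᵢ − δ(cᵢ) − i·cᵢ·w = 0` for all
`i < n`, and consequently `a^{n−i}/cᵢ` is a constant whenever `cᵢ ≠ 0`. -/
theorem minpoly_coeff_logderiv {L U : Type*} [Field L] [CharZero L] [Field U] [Algebra L U]
    (δL : Derivation ℤ L L) (δU : Derivation ℤ U U)
    (hcompat : ∀ c : L, δU (algebraMap L U c) = algebraMap L U (δL c))
    (a : U) (halg : IsIntegral L a)
    (w : L) (hw : δU a = algebraMap L U w * a) :
    ∀ i < (minpoly L a).natDegree,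
      (((minpoly L a).natDegree : L) * w * (minpoly L a).coeff i
          - δL ((minpoly L a).coeff i) - (i : L) * (minpoly L a).coeff i * w = 0)
      ∧ ((minpoly L a).coeff i ≠ 0 →
          δU (a ^ ((minpoly L a).natDegree - i) /
            algebraMap L U ((minpoly L a).coeff i)) = 0) :=
  minpoly_coeff_logderiv_general δL δU hcompat a w hw
end
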